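/- Let α ∈ ℤ³ with α_i < 0 for i = 0,1,2, and let a, b, c ∈ ℤ³ have all entries nonnegative. Then π( x^c · Q( x^b · Q( x^{α+a}_{\{0,1,2\}} ) ) ) = ρ(α;a,b,c)·x^{α+a+b+c}. (This computes the tree contribution m_{T_5} in the homological-perturbation formula for the higher product m_4 on the cohomology of line bundles on P², with one argument in H² and three arguments in H⁰.) -/
import Mathlib


/-- Indexing data for a Čech symbol `x^e_I` on `ℙ²`: the support `I ⊆ {0,1,2}`
and the exponent vector `e ∈ ℤ³`. -/
abbrev CechSym : Type := Finset (Fin 3) × (Fin 3 → ℤ)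

/-- The ℂ-vector space spanned by the formal symbols `x^e_I`. -/
abbrev CechSpan : Type := CechSym →₀ ℂ

/-- The ℂ-vector space spanned by the Laurent monomials `x^e`. -/
abbrev LaurentSpan : Type := (Fin 3 → ℤ) →₀ ℂ

/-- Value of the homotopy `Q` on the basis symbol `x^e_I`:
`(−1)^j x^e_{I∖{k}}` if the set `{i : e_i ≥ 0}` is nonempty, its maximum `k`
lies in `I`, and `k` is the `(j+1)`-st smallest element of `I`; `0` otherwise
(in particular `Q` vanishes on symbols with `|I| = 1`, since `x^e_∅` is not
a symbol). -/
noncomputable def qBasis (p : CechSym) : CechSpan :=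
  if h : (Finset.univ.filter (fun i => 0 ≤ p.2 i)).Nonempty then
    let k := (Finset.univ.filter (fun i => 0 ≤ p.2 i)).max' h
    if k ∈ p.1 ∧ p.1 ≠ {k} then
      ((-1 : ℂ) ^ (p.1.filter (fun j => j < k)).card) •
        Finsupp.single (p.1.erase k, p.2) 1
    else 0
  else 0

/-- The homotopy `Q`, extended linearly from its values on basis symbols. -/
noncomputable def Qmap (m : CechSpan) : CechSpan :=
  m.sum fun p c => c • qBasis p

/-- Multiplication by the monomial `x^a` (for `a` with nonnegative entries):
`x^a · x^e_I = x^{e+a}_I`, extended linearly. -/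
noncomputable def mulMon (a : Fin 3 → ℤ) (m : CechSpan) : CechSpan :=
  m.sum fun p c => Finsupp.single (p.1, p.2 + a) c

/-- The projection `π`: `π(x^e_I) = x^e` if `I = {2}` and all `e_i ≥ 0`,
and `π(x^e_I) = 0` otherwise; extended linearly. -/
noncomputable def piMap (m : CechSpan) : LaurentSpan :=
  m.sum fun p c =>
    if p.1 = ({2} : Finset (Fin 3)) ∧ ∀ i, 0 ≤ p.2 i then
      Finsupp.single p.2 c
    else 0

/-- The quantity `ρ(α;a,b,c)`. -/
def rho (α a b c : Fin 3 → ℤ) : ℤ :=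
  if 0 ≤ α 0 + a 0 ∧ α 1 + a 1 < 0 ∧ 0 ≤ α 1 + a 1 + b 1 ∧
      α 2 + a 2 + b 2 < 0 ∧ 0 ≤ α 2 + a 2 + b 2 + c 2
  then 1 else 0

lemma Qmap_single (p : CechSym) (z : ℂ) : Qmap (Finsupp.single p z) = z • qBasis p := by
  unfold Qmap; rw [Finsupp.sum_single_index]; simp

lemma Qmap_zero : Qmap 0 = 0 := by simp [Qmap]

lemma mulMon_single (a : Fin 3 → ℤ) (p : CechSym) (z : ℂ) :
    mulMon a (Finsupp.single p z) = Finsupp.single (p.1, p.2 + a) z := by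
  unfold mulMon; rw [Finsupp.sum_single_index]; simp

lemma mulMon_zero (a : Fin 3 → ℤ) : mulMon a 0 = 0 := by simp [mulMon]

lemma piMap_single (p : CechSym) (z : ℂ) :
    piMap (Finsupp.single p z) =
      if p.1 = ({2} : Finset (Fin 3)) ∧ ∀ i, 0 ≤ p.2 i then Finsupp.single p.2 z
      else 0 := by
  unfold piMap; rw [Finsupp.sum_single_index]; simp

lemma piMap_zero : piMap 0 = 0 := by simp [piMap]


lemma qBasis_eval (I : Finset (Fin 3)) (e : Fin 3 → ℤ) (S : Finset (Fin 3))
    (hS : Finset.univ.filter (fun i => 0 ≤ e i) = S) (hne : S.Nonempty) (k : Fin 3)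
    (hk : ∀ h : S.Nonempty, S.max' h = k) :
    qBasis (I, e) = if k ∈ I ∧ I ≠ {k} then
      ((-1 : ℂ) ^ (I.filter (fun j => j < k)).card) • Finsupp.single (I.erase k, e) 1
    else 0 := by
  unfold qBasis
  simp only [hS]
  rw [dif_pos hne]
  simp only [hk hne]

lemma qBasis_zero (I : Finset (Fin 3)) (e : Fin 3 → ℤ)
    (hS : Finset.univ.filter (fun i => 0 ≤ e i) = ∅) :
    qBasis (I, e) = 0 := by
  unfold qBasis
  simp [hS]


lemma Qmap_smul (z : ℂ) (m : CechSpan) : Qmap (z • m) = z • Qmap m := by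
  unfold Qmap
  rw [Finsupp.sum_smul_index (fun p => by simp), Finsupp.smul_sum]
  simp [mul_smul]

lemma mulMon_smul (a : Fin 3 → ℤ) (z : ℂ) (m : CechSpan) :
    mulMon a (z • m) = z • mulMon a m := by
  unfold mulMon
  rw [Finsupp.sum_smul_index (fun p => by simp), Finsupp.smul_sum]
  simp [Finsupp.smul_single]

lemma piMap_smul (z : ℂ) (m : CechSpan) : piMap (z • m) = z • piMap m := by
  unfold piMap
  rw [Finsupp.sum_smul_index (fun p => by simp), Finsupp.smul_sum]
  congr 1; ext p v
  split <;> simp [Finsupp.smul_single]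

lemma mulMon_single' (a : Fin 3 → ℤ) (I : Finset (Fin 3)) (e : Fin 3 → ℤ) (z : ℂ) :
    mulMon a (Finsupp.single (I, e) z) = Finsupp.single (I, e + a) z :=
  mulMon_single a (I, e) z

lemma piMap_single' (I : Finset (Fin 3)) (e : Fin 3 → ℤ) (z : ℂ) :
    piMap (Finsupp.single (I, e) z) =
      if I = ({2} : Finset (Fin 3)) ∧ ∀ i, 0 ≤ e i then Finsupp.single e z
      else 0 :=
  piMap_single (I, e) z


/-- for `α ∈ ℤ³` with all entries negative and `a, b, c ∈ ℤ³`
with all entries nonnegative,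
`π( x^c · Q( x^b · Q( x^{α+a}_{{0,1,2}} ) ) ) = ρ(α;a,b,c)·x^{α+a+b+c}`. -/
theorem tree_contribution_m4 (α a b c : Fin 3 → ℤ)
    (hα : ∀ i, α i < 0) (ha : ∀ i, 0 ≤ a i) (hb : ∀ i, 0 ≤ b i)
    (hc : ∀ i, 0 ≤ c i) :
    piMap (mulMon c (Qmap (mulMon b
        (Qmap (Finsupp.single ((Finset.univ : Finset (Fin 3)), α + a) 1))))) =
      (rho α a b c : ℂ) • Finsupp.single (α + a + b + c) 1 := by
  have hb0 := hb 0; have hb1 := hb 1; have hb2 := hb 2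
  have hc0 := hc 0; have hc1 := hc 1; have hc2 := hc 2
  rw [Qmap_single, one_smul]
  by_cases h2 : 0 ≤ α 2 + a 2
  · -- case A: first max is 2, killed at second Q
    rw [qBasis_eval Finset.univ (α + a) _ rfl ⟨2, by simp [h2]⟩ 2
      (fun h => le_antisymm (Finset.max'_le _ _ _ (fun x _ => by fin_cases x <;> decide))
        (Finset.le_max' _ _ (by simp [h2])))]
    rw [if_pos (by decide), show (Finset.univ.erase (2:Fin 3)) = {0,1} from by decide]
    rw [mulMon_smul, mulMon_single', Qmap_smul, Qmap_single]
    rw [qBasis_eval _ (α + a + b) _ rfl ⟨2, by simp; omega⟩ 2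
      (fun h => le_antisymm (Finset.max'_le _ _ _ (fun x _ => by fin_cases x <;> decide))
        (Finset.le_max' _ _ (by simp; omega)))]
    rw [if_neg (by decide), rho, if_neg (by omega)]
    simp [mulMon_zero, piMap_zero]
  · by_cases h1 : 0 ≤ α 1 + a 1
    · -- case B: first max is 1
      rw [qBasis_eval Finset.univ (α + a) _ rfl ⟨1, by simp [h1]⟩ 1
        (fun h => le_antisymm
          (Finset.max'_le _ _ _ (fun x hx => by
            fin_cases x <;> first | decide | (simp at hx; omega)))
          (Finset.le_max' _ _ (by simp [h1])))]
      rw [if_pos (by decide), show (Finset.univ.erase (1:Fin 3)) = {0,2} from by decide]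
      rw [mulMon_smul, mulMon_single', Qmap_smul, Qmap_single]
      by_cases h2b : 0 ≤ α 2 + a 2 + b 2
      · rw [qBasis_eval _ (α + a + b) _ rfl ⟨2, by simp; omega⟩ 2
          (fun h => le_antisymm (Finset.max'_le _ _ _ (fun x _ => by fin_cases x <;> decide))
            (Finset.le_max' _ _ (by simp; omega)))]
        rw [if_pos (by decide), show (({0,2}:Finset (Fin 3)).erase 2) = {0} from by decide]
        simp only [mulMon_smul, mulMon_single', piMap_smul, piMap_single']
        rw [if_neg (by simp), rho, if_neg (by omega)]
        simp
      · rw [qBasis_eval _ (α + a + b) _ rfl ⟨1, by simp; omega⟩ 1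
          (fun h => le_antisymm
            (Finset.max'_le _ _ _ (fun x hx => by
              fin_cases x <;> first | decide | (simp at hx; omega)))
            (Finset.le_max' _ _ (by simp; omega)))]
        rw [if_neg (by decide), rho, if_neg (by omega)]
        simp [mulMon_zero, piMap_zero]
    · by_cases h0 : 0 ≤ α 0 + a 0
      · -- case C: first max is 0
        rw [qBasis_eval Finset.univ (α + a) _ rfl ⟨0, by simp [h0]⟩ 0
          (fun h => le_antisymm
            (Finset.max'_le _ _ _ (fun x hx => by
              fin_cases x <;> first | decide | (simp at hx; omega)))
            (Finset.le_max' _ _ (by simp [h0])))]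
        rw [if_pos (by decide), show (Finset.univ.erase (0:Fin 3)) = {1,2} from by decide]
        rw [mulMon_smul, mulMon_single', Qmap_smul, Qmap_single]
        by_cases h2b : 0 ≤ α 2 + a 2 + b 2
        · rw [qBasis_eval _ (α + a + b) _ rfl ⟨2, by simp; omega⟩ 2
            (fun h => le_antisymm (Finset.max'_le _ _ _ (fun x _ => by fin_cases x <;> decide))
              (Finset.le_max' _ _ (by simp; omega)))]
          rw [if_pos (by decide), show (({1,2}:Finset (Fin 3)).erase 2) = {1} from by decide]
          simp only [mulMon_smul, mulMon_single', piMap_smul, piMap_single']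
          rw [if_neg (by simp), rho, if_neg (by omega)]
          simp
        · by_cases h1b : 0 ≤ α 1 + a 1 + b 1
          · -- the main branch
            rw [qBasis_eval _ (α + a + b) _ rfl ⟨1, by simp; omega⟩ 1
              (fun h => le_antisymm
                (Finset.max'_le _ _ _ (fun x hx => by
                  fin_cases x <;> first | decide | (simp at hx; omega)))
                (Finset.le_max' _ _ (by simp; omega)))]
            rw [if_pos (by decide), show (({1,2}:Finset (Fin 3)).erase 1) = {2} from by decide]
            simp only [mulMon_smul, mulMon_single', piMap_smul, piMap_single']
            by_cases h2c : 0 ≤ α 2 + a 2 + b 2 + c 2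
            · rw [if_pos (by exact ⟨by simp, fun i => by fin_cases i <;> simp <;> omega⟩)]
              rw [rho, if_pos (by omega)]
              norm_num
              rfl
            · rw [if_neg (by
                  rintro ⟨-, hall⟩
                  have := hall 2
                  simp at this
                  omega)]
              rw [rho, if_neg (by omega)]
              simp
          · rw [qBasis_eval _ (α + a + b) _ rfl ⟨0, by simp; omega⟩ 0
              (fun h => le_antisymm
                (Finset.max'_le _ _ _ (fun x hx => by
                  fin_cases x <;> first | decide | (simp at hx; omega)))
                (Finset.le_max' _ _ (by simp; omega)))]
            rw [if_neg (by decide), rho, if_neg (by omega)]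
            simp [mulMon_zero, piMap_zero]
      · -- case D: empty filter
        rw [qBasis_zero _ _ (by ext i; fin_cases i <;> simp <;> omega)]
        rw [rho, if_neg (by omega)]
        simp [mulMon_zero, Qmap_zero, piMap_zero]
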